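/- Let 1 < p < 2 and b > 0. There exist constants δ₀ > 0 and C > 0 (depending only on p and b) such that the following holds for every δ ∈ (0, δ₀) and every integer i ≥ 2: if M ∈ ℝ^{2×2} satisfies |M − E| < δ for some E ∈ {B_i, −B_i, C_i, −C_i}, then, writing a := (M₁₁, M₁₂) and c := (M₂₁, M₂₂), one has | |a|^{p−2} a − (−c₂, c₁) | ≤ C · δ^{(p−1)/2} · |a|^{(p−1)/2}. -/
import Mathlib


open Real

attribute [local instance] Matrix.normedAddCommGroup

/-- `B_i = diag(b(i−1), −b^{p−1}(i−1)^{p−1})`. -/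
noncomputable def Bmat (p b : ℝ) (i : ℕ) : Matrix (Fin 2) (Fin 2) ℝ :=
  !![b * ((i : ℝ) - 1), 0; 0, -(b ^ (p - 1) * ((i : ℝ) - 1) ^ (p - 1))]

/-- `C_i = diag(−i, i^{p−1})`. -/
noncomputable def Cmat (p b : ℝ) (i : ℕ) : Matrix (Fin 2) (Fin 2) ℝ :=
  !![-(i : ℝ), 0; 0, (i : ℝ) ^ (p - 1)]

/-- The vector `(x, y)` as an element of Euclidean `ℝ²`. -/
noncomputable def vec2 (x y : ℝ) : EuclideanSpace ℝ (Fin 2) :=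
  (WithLp.equiv 2 (Fin 2 → ℝ)).symm ![x, y]

lemma vec2_sub (x y x' y' : ℝ) : vec2 x y - vec2 x' y' = vec2 (x-x') (y-y') := by
  ext i; fin_cases i <;> simp [vec2]

lemma vec2_smul (s x y : ℝ) : s • vec2 x y = vec2 (s*x) (s*y) := by
  ext i; fin_cases i <;> simp [vec2]

lemma norm_vec2 (x y : ℝ) : ‖vec2 x y‖ = Real.sqrt (x^2 + y^2) := by
  rw [EuclideanSpace.norm_eq]
  simp [vec2, Fin.sum_univ_two, sq_abs]

lemma norm_vec2_le (x y : ℝ) : ‖vec2 x y‖ ≤ |x| + |y| := by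
  rw [norm_vec2]
  have h : Real.sqrt (x^2+y^2) ≤ Real.sqrt ((|x|+|y|)^2) :=
    Real.sqrt_le_sqrt (by nlinarith [abs_nonneg x, abs_nonneg y, sq_abs x, sq_abs y])
  simpa [Real.sqrt_sq (by positivity : (0:ℝ) ≤ |x| + |y|)] using h

lemma norm_vec2_x0 (x : ℝ) : ‖vec2 x 0‖ = |x| := by
  rw [norm_vec2]; simp [Real.sqrt_sq_eq_abs]

lemma abs_rpow_sub_rpow_le {s : ℝ} (hs : s < 0) {μ x y : ℝ} (hμ : 0 < μ)
    (hx : μ ≤ x) (hy : μ ≤ y) :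
    |x ^ s - y ^ s| ≤ (-s) * μ ^ (s - 1) * |x - y| := by
  have key := Convex.norm_image_sub_le_of_norm_hasDerivWithin_le
    (f := fun t : ℝ => t ^ s) (f' := fun t : ℝ => s * t ^ (s - 1))
    (C := (-s) * μ ^ (s - 1)) (s := Set.Ici μ)
    (fun t ht => (Real.hasDerivAt_rpow_const
      (Or.inl (ne_of_gt (hμ.trans_le ht)))).hasDerivWithinAt)
    (fun t ht => by
      have ht0 : 0 < t := hμ.trans_le ht
      rw [Real.norm_eq_abs, abs_mul, abs_of_neg hs, abs_of_nonneg (Real.rpow_nonneg ht0.le _)]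
      exact mul_le_mul_of_nonneg_left
        (Real.rpow_le_rpow_of_nonpos hμ ht (by linarith)) (by linarith))
    (convex_Ici μ) hy hx
  simpa [Real.norm_eq_abs] using key

/-- **Lemma (perturbed-kernel estimate, case `1 < p < 2`).** There are `δ₀, C > 0`
(depending only on `p, b`) such that for every `δ ∈ (0,δ₀)`, every `i ≥ 2`, and every
matrix `M` with `|M − E| < δ` for some `E ∈ {±B_i, ±C_i}`, the rows `a = (M₁₁, M₁₂)`,
`c = (M₂₁, M₂₂)` satisfy `| |a|^{p−2}a − (−c₂, c₁) | ≤ C·δ^{(p−1)/2}·|a|^{(p−1)/2}`. -/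
theorem perturbed_kernel_estimate_p_lt_two (p b : ℝ) (hp : 1 < p) (hp2 : p < 2) (hb : 0 < b) :
    ∃ δ₀ C : ℝ, 0 < δ₀ ∧ 0 < C ∧
      ∀ δ : ℝ, 0 < δ → δ < δ₀ →
      ∀ i : ℕ, 2 ≤ i →
      ∀ M E : Matrix (Fin 2) (Fin 2) ℝ,
        (E = Bmat p b i ∨ E = -Bmat p b i ∨ E = Cmat p b i ∨ E = -Cmat p b i) →
        ‖M - E‖ < δ →
        ‖(‖vec2 (M 0 0) (M 0 1)‖ ^ (p - 2)) • vec2 (M 0 0) (M 0 1)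
            - vec2 (-(M 1 1)) (M 1 0)‖
          ≤ C * δ ^ ((p - 1) / 2) * ‖vec2 (M 0 0) (M 0 1)‖ ^ ((p - 1) / 2) := by
  set m : ℝ := min b 2 with hm_def
  have hm : 0 < m := lt_min hb (by norm_num)
  set K : ℝ := 2 + 2 * (m/2) ^ (p-2) + (2-p) * 2 ^ ((3:ℝ)-p) * m ^ (p-2) * 2 with hK_def
  have hK : 0 < K := by
    have h1 : (0:ℝ) ≤ (m/2) ^ (p-2) := Real.rpow_nonneg (by positivity) _
    have h2 : (0:ℝ) ≤ (2-p) * 2 ^ ((3:ℝ)-p) * m ^ (p-2) * 2 :=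
      mul_nonneg (mul_nonneg (mul_nonneg (by linarith)
        (Real.rpow_nonneg (by norm_num) _)) (Real.rpow_nonneg hm.le _)) (by norm_num)
    rw [hK_def]; linarith
  set w : ℝ := (m/2) ^ ((p-1)/2) with hw_def
  have hw : 0 < w := Real.rpow_pos_of_pos (by positivity) _
  refine ⟨min 1 (m/4), K / w, lt_min one_pos (by positivity), by positivity,
    fun δ hδ hδ0 i hi2 M E hE hME => ?_⟩
  have hδ1 : δ ≤ 1 := le_of_lt (lt_of_lt_of_le hδ0 (min_le_left _ _))
  have hδm : δ ≤ m/4 := le_of_lt (lt_of_lt_of_le hδ0 (min_le_right _ _))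
  -- facts about E
  have hi : (2:ℝ) ≤ (i:ℝ) := by exact_mod_cast hi2
  obtain ⟨h01, h10, hρ, hdiag⟩ :
      E 0 1 = 0 ∧ E 1 0 = 0 ∧ m ≤ |E 0 0| ∧ -(E 1 1) = |E 0 0| ^ (p-2) * (E 0 0) := by
    have h1 : (1:ℝ) ≤ (i:ℝ) - 1 := by linarith
    have ht : 0 < b * ((i:ℝ) - 1) := by nlinarith
    have habs : |b * ((i:ℝ) - 1)| = b * ((i:ℝ) - 1) := abs_of_pos ht
    have hmB : m ≤ b * ((i:ℝ) - 1) := by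
      calc m ≤ b := min_le_left _ _
        _ = b * 1 := by ring
        _ ≤ b * ((i:ℝ) - 1) := by nlinarith
    have hmC : m ≤ |(-(i:ℝ))| := by
      rw [abs_neg, abs_of_nonneg (by linarith)]
      calc m ≤ 2 := min_le_right _ _
        _ ≤ (i:ℝ) := hi
    have hBpow : b ^ (p-1) * ((i:ℝ)-1) ^ (p-1) = (b * ((i:ℝ)-1)) ^ (p-2) * (b * ((i:ℝ)-1)) := by
      rw [← Real.mul_rpow hb.le (by linarith : (0:ℝ) ≤ (i:ℝ)-1)]
      rw [← Real.rpow_add_one ht.ne' (p-2)]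
      congr 1; ring
    have hCpow : (i:ℝ) ^ (p-1) = (i:ℝ) ^ (p-2) * (i:ℝ) := by
      rw [← Real.rpow_add_one (by positivity : (i:ℝ) ≠ 0) (p-2)]
      congr 1; ring
    rcases hE with rfl | rfl | rfl | rfl
    · refine ⟨by simp [Bmat], by simp [Bmat], ?_, ?_⟩
      · simpa [Bmat, habs] using hmB
      · simp only [Bmat, Matrix.cons_val', Matrix.cons_val_zero, Matrix.cons_val_one,
          Matrix.head_cons, Matrix.empty_val', Matrix.cons_val_fin_one, Matrix.head_fin_const,
          Matrix.of_apply]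
        rw [habs, neg_neg, hBpow]
    · refine ⟨by simp [Bmat], by simp [Bmat], ?_, ?_⟩
      · simpa [Bmat, abs_neg, habs] using hmB
      · simp only [Bmat, Matrix.neg_apply, Matrix.cons_val', Matrix.cons_val_zero,
          Matrix.cons_val_one, Matrix.head_cons, Matrix.empty_val', Matrix.cons_val_fin_one,
          Matrix.head_fin_const, Matrix.of_apply]
        rw [abs_neg, habs, neg_neg, hBpow]; ring
    · refine ⟨by simp [Cmat], by simp [Cmat], ?_, ?_⟩
      · simpa [Cmat] using hmC
      · simp only [Cmat, Matrix.cons_val', Matrix.cons_val_zero, Matrix.cons_val_one,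
          Matrix.head_cons, Matrix.empty_val', Matrix.cons_val_fin_one, Matrix.head_fin_const,
          Matrix.of_apply]
        rw [abs_neg, abs_of_nonneg (by linarith : (0:ℝ) ≤ (i:ℝ)), hCpow]; ring
    · refine ⟨by simp [Cmat], by simp [Cmat], ?_, ?_⟩
      · simpa [Cmat, abs_neg] using hmC
      · simp only [Cmat, Matrix.neg_apply, Matrix.cons_val', Matrix.cons_val_zero,
          Matrix.cons_val_one, Matrix.head_cons, Matrix.empty_val', Matrix.cons_val_fin_one,
          Matrix.head_fin_const, Matrix.of_apply]
        rw [neg_neg, abs_neg, abs_neg, abs_of_nonneg (by linarith : (0:ℝ) ≤ (i:ℝ)), hCpow]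
        ring
  -- notation
  set α : ℝ := E 0 0 with hα_def
  set ρ : ℝ := |α| with hρ_def
  have hρ0 : 0 < ρ := lt_of_lt_of_le hm hρ
  set a : EuclideanSpace ℝ (Fin 2) := vec2 (M 0 0) (M 0 1) with ha_def
  set r : ℝ := ‖a‖ with hr_def
  -- entrywise bounds
  have hent : ∀ i' j' : Fin 2, |M i' j' - E i' j'| ≤ δ := fun i' j' => by
    have h := Matrix.norm_entry_le_entrywise_sup_norm (M - E) (i := i') (j := j')
    rw [Matrix.sub_apply] at h
    exact le_of_lt (lt_of_le_of_lt h hME)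
  -- a is close to aE = vec2 α 0
  have had : ‖a - vec2 α 0‖ ≤ 2 * δ := by
    rw [ha_def, vec2_sub]
    refine (norm_vec2_le _ _).trans ?_
    have h1 := hent 0 0
    have h2 := hent 0 1
    rw [h01] at h2
    simp only [sub_zero] at h2 ⊢
    linarith [abs_sub_abs_le_abs_sub (M 0 0 - α) 0]
  have hρr : |r - ρ| ≤ 2 * δ := by
    have := abs_norm_sub_norm_le a (vec2 α 0)
    rw [norm_vec2_x0] at this
    exact this.trans had
  have h2δ : 2 * δ ≤ m / 2 := by linarith
  have hrm : m / 2 ≤ r := by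
    have : ρ - 2*δ ≤ r := by
      have := abs_le.mp hρr
      linarith [this.2]
    linarith [hρ]
  have hrρ2 : ρ / 2 ≤ r := by
    have : ρ - 2*δ ≤ r := by
      have := abs_le.mp hρr
      linarith [this.2]
    linarith [hρ]
  have hr0 : 0 < r := lt_of_lt_of_le (by positivity) hrm
  -- T2 : ρ^(p-2) • vec2 α 0 = vec2 (-(E 1 1)) (E 1 0), distance to v
  have hT2 : ‖(ρ ^ (p-2)) • vec2 α 0 - vec2 (-(M 1 1)) (M 1 0)‖ ≤ 2 * δ := by
    rw [vec2_smul, mul_zero, vec2_sub]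
    refine (norm_vec2_le _ _).trans ?_
    have h1 := hent 1 1
    have h2 := hent 1 0
    have key : ρ ^ (p-2) * α - -(M 1 1) = M 1 1 - E 1 1 := by
      rw [hρ_def, ← hdiag]; ring
    rw [key]
    rw [show (0:ℝ) - M 1 0 = -(M 1 0 - E 1 0) by rw [h10]; ring, abs_neg]
    linarith
  -- T1 pieces
  have hrpow : r ^ (p-2) ≤ (m/2) ^ (p-2) :=
    Real.rpow_le_rpow_of_nonpos (by positivity) hrm (by linarith)
  have hsub : |r ^ (p-2) - ρ ^ (p-2)| ≤ (2-p) * (ρ/2) ^ ((p-2) - 1) * (2*δ) := by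
    have h := abs_rpow_sub_rpow_le (s := p-2) (x := r) (y := ρ) (by linarith)
      (μ := ρ/2) (by positivity) hrρ2 (by linarith)
    calc |r ^ (p-2) - ρ ^ (p-2)| ≤ (-(p-2)) * (ρ/2) ^ ((p-2)-1) * |r - ρ| := h
      _ ≤ (2-p) * (ρ/2) ^ ((p-2) - 1) * (2*δ) := by
          rw [show -(p-2) = 2-p by ring]
          exact mul_le_mul_of_nonneg_left hρr
            (mul_nonneg (by linarith) (Real.rpow_nonneg (by positivity) _))
  have hrhofac : (ρ/2) ^ ((p-2)-1) * ρ = 2 ^ ((3:ℝ)-p) * ρ ^ (p-2) := by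
    rw [Real.div_rpow hρ0.le (by norm_num : (0:ℝ) ≤ 2)]
    rw [div_mul_eq_mul_div, ← Real.rpow_add_one hρ0.ne' ((p-2)-1)]
    rw [show (p-2) - 1 + 1 = p - 2 by ring]
    rw [div_eq_mul_inv, ← Real.rpow_neg (by norm_num : (0:ℝ) ≤ 2)]
    rw [show -((p-2)-1) = (3:ℝ)-p by ring]
    ring
  have hρpow : ρ ^ (p-2) ≤ m ^ (p-2) :=
    Real.rpow_le_rpow_of_nonpos hm hρ (by linarith)
  -- main bound : LHS ≤ K * δ
  have hmain : ‖(r ^ (p-2)) • a - vec2 (-(M 1 1)) (M 1 0)‖ ≤ K * δ := by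
    have hsplit : (r ^ (p-2)) • a - vec2 (-(M 1 1)) (M 1 0)
        = ((r ^ (p-2)) • (a - vec2 α 0) + (r ^ (p-2) - ρ ^ (p-2)) • vec2 α 0)
          + ((ρ ^ (p-2)) • vec2 α 0 - vec2 (-(M 1 1)) (M 1 0)) := by
      rw [smul_sub, sub_smul]; abel
    rw [hsplit]
    have hle1 : ‖(r ^ (p-2)) • (a - vec2 α 0)‖ ≤ (m/2) ^ (p-2) * (2*δ) := by
      rw [norm_smul, Real.norm_eq_abs, abs_of_nonneg (Real.rpow_nonneg hr0.le _)]
      exact mul_le_mul hrpow had (norm_nonneg _) (Real.rpow_nonneg (by positivity) _)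
    have hle2 : ‖(r ^ (p-2) - ρ ^ (p-2)) • vec2 α 0‖
        ≤ (2-p) * 2 ^ ((3:ℝ)-p) * m ^ (p-2) * (2*δ) := by
      rw [norm_smul, Real.norm_eq_abs, norm_vec2_x0, ← hρ_def]
      calc |r ^ (p-2) - ρ ^ (p-2)| * ρ
          ≤ ((2-p) * (ρ/2) ^ ((p-2)-1) * (2*δ)) * ρ := by
            exact mul_le_mul_of_nonneg_right hsub hρ0.le
        _ = (2-p) * ((ρ/2) ^ ((p-2)-1) * ρ) * (2*δ) := by ring
        _ = (2-p) * (2 ^ ((3:ℝ)-p) * ρ ^ (p-2)) * (2*δ) := by rw [hrhofac]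
        _ ≤ (2-p) * 2 ^ ((3:ℝ)-p) * m ^ (p-2) * (2*δ) := by
            rw [show (2-p) * (2 ^ ((3:ℝ)-p) * ρ ^ (p-2)) * (2*δ)
                = ((2-p) * 2 ^ ((3:ℝ)-p)) * ρ ^ (p-2) * (2*δ) by ring,
              show (2-p) * 2 ^ ((3:ℝ)-p) * m ^ (p-2) * (2*δ)
                = ((2-p) * 2 ^ ((3:ℝ)-p)) * m ^ (p-2) * (2*δ) by ring]
            exact mul_le_mul_of_nonneg_right (mul_le_mul_of_nonneg_left hρpow
              (mul_nonneg (by linarith) (Real.rpow_nonneg (by norm_num) _)))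
              (by positivity)
    calc ‖((r ^ (p-2)) • (a - vec2 α 0) + (r ^ (p-2) - ρ ^ (p-2)) • vec2 α 0)
          + ((ρ ^ (p-2)) • vec2 α 0 - vec2 (-(M 1 1)) (M 1 0))‖
        ≤ ‖(r ^ (p-2)) • (a - vec2 α 0) + (r ^ (p-2) - ρ ^ (p-2)) • vec2 α 0‖
          + ‖(ρ ^ (p-2)) • vec2 α 0 - vec2 (-(M 1 1)) (M 1 0)‖ := norm_add_le _ _
      _ ≤ (‖(r ^ (p-2)) • (a - vec2 α 0)‖ + ‖(r ^ (p-2) - ρ ^ (p-2)) • vec2 α 0‖)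
          + (2*δ) := add_le_add (norm_add_le _ _) hT2
      _ ≤ ((m/2) ^ (p-2) * (2*δ) + (2-p) * 2 ^ ((3:ℝ)-p) * m ^ (p-2) * (2*δ)) + 2*δ := by
          exact add_le_add (add_le_add hle1 hle2) le_rfl
      _ = K * δ := by rw [hK_def]; ring
  -- convert K*δ to the final form
  have hδpow : δ ≤ δ ^ ((p-1)/2) := by
    nth_rewrite 1 [← Real.rpow_one δ]
    exact Real.rpow_le_rpow_of_exponent_ge hδ hδ1 (by linarith)
  have hrpow' : w ≤ r ^ ((p-1)/2) := by
    rw [hw_def]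
    exact Real.rpow_le_rpow (by positivity) hrm (by linarith)
  have hδppos : 0 < δ ^ ((p-1)/2) := Real.rpow_pos_of_pos hδ _
  refine hmain.trans ?_
  have step1 : K * δ ≤ K * δ ^ ((p-1)/2) := mul_le_mul_of_nonneg_left hδpow hK.le
  refine step1.trans ?_
  rw [show K / w * δ ^ ((p-1)/2) * r ^ ((p-1)/2) = (K / w * r ^ ((p-1)/2)) * δ ^ ((p-1)/2) by
    ring]
  refine mul_le_mul_of_nonneg_right ?_ hδppos.le
  calc K = K / w * w := by field_simp
    _ ≤ K / w * r ^ ((p-1)/2) := by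
        exact mul_le_mul_of_nonneg_left hrpow' (by positivity)
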